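/- arXiv:2311.12771 — 4 statements merged into one kernel-verified Lean document; each statement's English description precedes it below -/
import Mathlib

section
/- Let A be an m × n matrix over 𝔽₂, and for each pair (i, j) with 1 ≤ i ≤ m, 1 ≤ j ≤ n define the map G_{ij} : 𝔽₂ⁿ × 𝔽₂ᵐ → 𝔽₂ⁿ × 𝔽₂ᵐ by G_{ij}(x, z) = (x, z + A_{ij}·x_j·e_i), where e_i is the i-th standard basis vector of 𝔽₂ᵐ (this is the action of the CNOT gate CNOT(j, n+i) applied when A_{ij} = 1). Then for every list L that enumerates each pair (i, j) exactly once, the composition of the maps G_{ij} along L sends (x, 0) to (x, A·x) for every x ∈ 𝔽₂ⁿ, where A·x is the matrix–vector product over 𝔽₂. -/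
/-- The action of the CNOT gate `CNOT(j, n + i)` controlled on `A i j`:
`G A i j (x, z) = (x, z + A i j * x j • e_i)`. -/
def cnotGate {m n : ℕ} (A : Matrix (Fin m) (Fin n) (ZMod 2)) (i : Fin m) (j : Fin n) :
    (Fin n → ZMod 2) × (Fin m → ZMod 2) → (Fin n → ZMod 2) × (Fin m → ZMod 2) :=
  fun xz => (xz.1, xz.2 + (A i j * xz.1 j) • (Pi.single i 1 : Fin m → ZMod 2))

/-!
Each gate fixes `x` and adds the vector `A i j * x j • e_i` to the target register, so a circuit
of such gates adds the sum of these vectors, whatever the order. Over an enumeration of all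
pairs this sum is `∑ i j, A i j * x j • e_i = A x`.
-/

theorem List.foldr_comp_map_shear {ι X M : Type*} [AddCommMonoid M] (f : ι → X → M)
    (L : List ι) (x : X) (z : M) :
    (L.map fun p (xz : X × M) => (xz.1, xz.2 + f p xz.1)).foldr (· ∘ ·) id (x, z) =
      (x, z + (L.map (f · x)).sum) := by
  induction L with
  | nil => simp
  | cons p L ih => simp [ih, add_assoc, add_comm (f p x)]

theorem List.sum_map_eq_sum_univ_of_count_eq_one {ι M : Type*} [Fintype ι] [BEq ι] [LawfulBEq ι]
    [AddCommMonoid M] (g : ι → M) (L : List ι) (hL : ∀ p, L.count p = 1) :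
    (L.map g).sum = ∑ p, g p := by
  classical
  have hL_univ : (L : Multiset ι) = Finset.univ.val := Multiset.ext.mpr fun p => by
    rw [Multiset.coe_count, Multiset.count_univ]
    convert hL p
  rw [Finset.sum_eq_multiset_sum, ← hL_univ, Multiset.map_coe, Multiset.sum_coe]

theorem Matrix.sum_smul_single_eq_mulVec {m n R : Type*} [Fintype m] [Fintype n] [DecidableEq m]
    [NonAssocSemiring R] (A : Matrix m n R) (x : n → R) :
    ∑ p : m × n, (A p.1 p.2 * x p.2) • (Pi.single p.1 1 : m → R) = A.mulVec x := by
  ext i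
  simp [Fintype.sum_prod_type, Finset.sum_apply, Pi.single_apply, Matrix.mulVec, dotProduct]

/-- Theorem 3.1 of the paper: for any enumeration `L` of the index pairs `(i, j)`
(each appearing exactly once), composing the CNOT gates along `L` sends `(x, 0)` to
`(x, A x)`, with the matrix–vector product taken over `𝔽₂`. -/
theorem matVecProd_circuit {m n : ℕ} (A : Matrix (Fin m) (Fin n) (ZMod 2))
    (L : List (Fin m × Fin n)) (hL : ∀ p : Fin m × Fin n, L.count p = 1)
    (x : Fin n → ZMod 2) :
    (L.map (fun p => cnotGate A p.1 p.2)).foldr (· ∘ ·) id (x, 0) = (x, A.mulVec x) := by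
  calc _ = (x, 0 + (L.map fun p => (A p.1 p.2 * x p.2) • Pi.single p.1 1).sum) :=
        List.foldr_comp_map_shear (fun p x => (A p.1 p.2 * x p.2) • Pi.single p.1 1) L x 0
    _ = (x, A.mulVec x) := by
      rw [List.sum_map_eq_sum_univ_of_count_eq_one _ L hL, Matrix.sum_smul_single_eq_mulVec,
        zero_add]
end

section
/- Let A be an m × n matrix over 𝔽₂, b ∈ 𝔽₂ᵐ, and define Ĉ(θ) = 1 − ∑_{x ∈ 𝔽₂ⁿ with A·x = b} α_x(θ)². Let x' ∈ 𝔽₂ⁿ with A·x' = b, and set θ_j = π·x'_j for each j (treating x'_j ∈ 𝔽₂ as the integer 0 or 1). Then Ĉ(θ) = 0, and θ is a global minimum of Ĉ : ℝⁿ → ℝ, i.e. Ĉ(φ) ≥ 0 = Ĉ(θ) for all φ ∈ ℝⁿ. -/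
open Real

/-- The amplitude `α_x(θ) = ∏_j cos(θ_j/2)^(1−x_j) · sin(θ_j/2)^(x_j)` of the
rotations-ansatz state, where `x_j ∈ 𝔽₂` is treated as the integer `0` or `1`. -/
noncomputable def alpha {n : ℕ} (θ : Fin n → ℝ) (x : Fin n → ZMod 2) : ℝ :=
  ∏ j, Real.cos (θ j / 2) ^ (1 - (x j).val) * Real.sin (θ j / 2) ^ (x j).val

/-- The Mod2VQLS cost function with the rotations ansatz:
`Ĉ(θ) = 1 − ∑_{x : A·x = b} α_x(θ)²`. -/
noncomputable def cost {m n : ℕ} (A : Matrix (Fin m) (Fin n) (ZMod 2))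
    (b : Fin m → ZMod 2) (θ : Fin n → ℝ) : ℝ :=
  1 - ∑ x ∈ Finset.univ.filter (fun x : Fin n → ZMod 2 => A.mulVec x = b), (alpha θ x) ^ 2

lemma zmod2_cases (v : ZMod 2) : v = 0 ∨ v = 1 := by revert v; decide

lemma zmod2_val0 : (0 : ZMod 2).val = 0 := rfl

lemma zmod2_val1 : (1 : ZMod 2).val = 1 := rfl

lemma sum_alpha_sq_all {n : ℕ} (φ : Fin n → ℝ) :
    ∑ x : Fin n → ZMod 2, alpha φ x ^ 2 = 1 := by
  have h : ∀ x : Fin n → ZMod 2, alpha φ x ^ 2 =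
      ∏ j, ((Real.cos (φ j / 2) ^ 2) ^ (1 - (x j).val) *
        (Real.sin (φ j / 2) ^ 2) ^ (x j).val) := by
    intro x
    rw [alpha, ← Finset.prod_pow]
    congr 1; funext j
    rw [mul_pow, ← pow_mul, ← pow_mul, ← pow_mul', ← pow_mul']
  simp_rw [h]
  have key := Finset.prod_univ_sum (t := fun _ : Fin n => (Finset.univ : Finset (ZMod 2)))
    (f := fun j v => (Real.cos (φ j / 2) ^ 2) ^ (1 - v.val) * (Real.sin (φ j / 2) ^ 2) ^ v.val)
  rw [Fintype.piFinset_univ] at key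
  rw [← key]
  apply Finset.prod_eq_one
  intro j _
  rw [show (Finset.univ : Finset (ZMod 2)) = {0, 1} by decide]
  rw [Finset.sum_insert (by decide), Finset.sum_singleton]
  simp [zmod2_val0, zmod2_val1]

lemma alpha_at_sol {n : ℕ} (x' : Fin n → ZMod 2) (θ : Fin n → ℝ)
    (hθ : ∀ j, θ j = Real.pi * ((x' j).val : ℝ)) (x : Fin n → ZMod 2) :
    alpha θ x = if x = x' then 1 else 0 := by
  by_cases h : x = x'
  · subst h
    rw [if_pos rfl, alpha]
    apply Finset.prod_eq_one
    intro j _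
    rcases zmod2_cases (x j) with hv | hv <;>
      rw [hθ j, hv] <;> norm_num [zmod2_val0, zmod2_val1]
  · rw [if_neg h, alpha]
    have hex : ∃ j, x j ≠ x' j := by
      by_contra hc
      push_neg at hc
      exact h (funext hc)
    obtain ⟨j, hj⟩ := hex
    apply Finset.prod_eq_zero (Finset.mem_univ j)
    rcases zmod2_cases (x' j) with hv | hv <;> rcases zmod2_cases (x j) with hw | hw
    · exact absurd (hw.trans hv.symm) hj
    · rw [hθ j, hv, hw]; norm_num [zmod2_val0, zmod2_val1]
    · rw [hθ j, hv, hw]; norm_num [zmod2_val0, zmod2_val1]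
    · exact absurd (hw.trans hv.symm) hj

/-- First part of Theorem 4.6 of the paper (solution case): if `A·x' = b` and
`θ_j = π·x'_j`, then `Ĉ(θ) = 0` and `θ` is a global minimum of `Ĉ`. -/
theorem cost_global_min_at_solution {m n : ℕ} (A : Matrix (Fin m) (Fin n) (ZMod 2))
    (b : Fin m → ZMod 2) (x' : Fin n → ZMod 2) (hx' : A.mulVec x' = b)
    (θ : Fin n → ℝ) (hθ : ∀ j, θ j = Real.pi * ((x' j).val : ℝ)) :
    cost A b θ = 0 ∧ ∀ φ : Fin n → ℝ, cost A b θ ≤ cost A b φ := by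
  have hzero : cost A b θ = 0 := by
    rw [cost]
    have hsum : ∑ x ∈ Finset.univ.filter (fun x : Fin n → ZMod 2 => A.mulVec x = b),
        (alpha θ x) ^ 2 = 1 := by
      rw [Finset.sum_eq_single x']
      · rw [alpha_at_sol x' θ hθ, if_pos rfl]; norm_num
      · intro y _ hy
        rw [alpha_at_sol x' θ hθ, if_neg hy]; norm_num
      · intro hx
        exact absurd (Finset.mem_filter.mpr ⟨Finset.mem_univ x', hx'⟩) hx
    rw [hsum]; ring
  refine ⟨hzero, fun φ => ?_⟩
  rw [hzero, cost, sub_nonneg, ← sum_alpha_sq_all φ]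
  exact Finset.sum_le_sum_of_subset_of_nonneg (Finset.filter_subset _ _)
    (fun i _ _ => sq_nonneg _)
end

section
/- Let A be an m × n matrix over 𝔽₂, b ∈ 𝔽₂ᵐ, and define Ĉ(θ) = 1 − ∑_{x ∈ 𝔽₂ⁿ with A·x = b} α_x(θ)². Let x' ∈ 𝔽₂ⁿ with A·x' ≠ b, and set θ_j = π·x'_j for each j (treating x'_j ∈ 𝔽₂ as the integer 0 or 1). Then Ĉ(θ) = 1, and θ is a global maximum of Ĉ : ℝⁿ → ℝ, i.e. Ĉ(φ) ≤ 1 = Ĉ(θ) for all φ ∈ ℝⁿ. -/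
open Real

lemma alpha_eq_zero_of_ne {n : ℕ} (θ : Fin n → ℝ) (x' : Fin n → ZMod 2)
    (hθ : ∀ j, θ j = Real.pi * ((x' j).val : ℝ)) (x : Fin n → ZMod 2) (hx : x ≠ x') :
    alpha θ x = 0 := by
  obtain ⟨j, hj⟩ : ∃ j, x j ≠ x' j := by
    by_contra h; push_neg at h; exact hx (funext h)
  apply Finset.prod_eq_zero (Finset.mem_univ j)
  rw [hθ j]
  have hx2 : (x j).val < 2 := (x j).val_lt
  have hx2' : (x' j).val < 2 := (x' j).val_lt
  have hne : (x j).val ≠ (x' j).val := by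
    intro h; exact hj (ZMod.val_injective 2 h)
  interval_cases h1 : (x j).val <;> interval_cases h2 : (x' j).val <;>
    simp_all [Real.cos_pi_div_two]

/-- First part of Theorem 4.6 of the paper (non-solution case): if `A·x' ≠ b` and
`θ_j = π·x'_j`, then `Ĉ(θ) = 1` and `θ` is a global maximum of `Ĉ`. -/
theorem cost_global_max_at_nonsolution {m n : ℕ} (A : Matrix (Fin m) (Fin n) (ZMod 2))
    (b : Fin m → ZMod 2) (x' : Fin n → ZMod 2) (hx' : A.mulVec x' ≠ b)
    (θ : Fin n → ℝ) (hθ : ∀ j, θ j = Real.pi * ((x' j).val : ℝ)) :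
    cost A b θ = 1 ∧ ∀ φ : Fin n → ℝ, cost A b φ ≤ cost A b θ := by
  have h1 : cost A b θ = 1 := by
    unfold cost
    have : ∀ x ∈ Finset.univ.filter (fun x : Fin n → ZMod 2 => A.mulVec x = b),
        (alpha θ x) ^ 2 = 0 := by
      intro x hx
      rw [Finset.mem_filter] at hx
      have : x ≠ x' := by rintro rfl; exact hx' hx.2
      rw [alpha_eq_zero_of_ne θ x' hθ x this]; ring
    rw [Finset.sum_eq_zero this]; ring
  refine ⟨h1, fun φ => ?_⟩
  rw [h1]
  unfold cost
  have : (0:ℝ) ≤ ∑ x ∈ Finset.univ.filter (fun x : Fin n → ZMod 2 => A.mulVec x = b),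
      (alpha φ x) ^ 2 := Finset.sum_nonneg fun x _ => sq_nonneg _
  linarith
end

section
/- Let A be an m × n matrix over 𝔽₂ and b ∈ 𝔽₂ᵐ, and define Ĉ(θ) = 1 − ∑_{x ∈ 𝔽₂ⁿ with A·x = b} α_x(θ)². Suppose the system A·x = b is consistent, i.e. there exists x₀ ∈ 𝔽₂ⁿ with A·x₀ = b. Let k be an odd integer and set θ_j = kπ/2 for every j. Then Ĉ(θ) = 1 − 2^{−rk(A)}, where rk(A) denotes the rank of A over 𝔽₂. -/
open Real

/-- Second part of Theorem 4.6 of the paper: if the system `A·x = b` is consistent,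
`k` is odd, and every `θ_j = kπ/2`, then `Ĉ(θ) = 1 − 2^(−rk(A))`, where `rk(A)` is
the rank of `A` over `𝔽₂`. -/
theorem cost_at_odd_angles {m n : ℕ} (A : Matrix (Fin m) (Fin n) (ZMod 2))
    (b : Fin m → ZMod 2) (hb : ∃ x₀ : Fin n → ZMod 2, A.mulVec x₀ = b)
    (k : ℤ) (hk : Odd k) (θ : Fin n → ℝ) (hθ : ∀ j, θ j = k * Real.pi / 2) :
    cost A b θ = 1 - (2 : ℝ) ^ (-(A.rank : ℤ)) := by
  obtain ⟨x₀, hx₀⟩ := hb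
  -- trigonometry
  have hcos0 : Real.cos (k * Real.pi / 2) = 0 := by
    obtain ⟨l, hl⟩ := hk
    exact Real.cos_eq_zero_iff.mpr ⟨l, by push_cast [hl]; ring⟩
  have hcsq : ∀ j, Real.cos (θ j / 2) ^ 2 = 1 / 2 := by
    intro j
    have h := Real.cos_sq (θ j / 2)
    rw [hθ j] at h ⊢
    rw [h, show 2 * (k * Real.pi / 2 / 2) = k * Real.pi / 2 by ring, hcos0]
    ring
  have hssq : ∀ j, Real.sin (θ j / 2) ^ 2 = 1 / 2 := by
    intro j
    have h := Real.sin_sq_add_cos_sq (θ j / 2)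
    have h2 := hcsq j
    linarith
  -- each amplitude squared equals (1/2)^n
  have halpha : ∀ x : Fin n → ZMod 2, (alpha θ x) ^ 2 = (1 / 2 : ℝ) ^ n := by
    intro x
    rw [alpha, ← Finset.prod_pow,
      show ((1:ℝ)/2) ^ n = ∏ _j : Fin n, (1/2 : ℝ) by simp]
    refine Finset.prod_congr rfl fun j _ => ?_
    rw [mul_pow, ← pow_mul, ← pow_mul]
    have hlt : (x j).val < 2 := (x j).val_lt
    have hv : (x j).val = 0 ∨ (x j).val = 1 := by omega
    rcases hv with h | h <;> simp [h, hcsq j, hssq j]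
  -- counting solutions
  have hrle : A.rank ≤ n := A.rank_le_width
  have hcard : (Finset.univ.filter (fun x : Fin n → ZMod 2 => A.mulVec x = b)).card
      = 2 ^ (n - A.rank) := by
    have hker : (Finset.univ.filter (fun x : Fin n → ZMod 2 => A.mulVec x = b)).card
        = (Finset.univ.filter (fun x : Fin n → ZMod 2 => A.mulVec x = 0)).card := by
      apply Finset.card_bij' (fun x _ => x + x₀) (fun y _ => y + x₀)
      · intro x hx
        simp only [Finset.mem_filter, Finset.mem_univ, true_and] at hx ⊢
        rw [Matrix.mulVec_add, hx, hx₀]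
        ext i; simp [CharTwo.add_self_eq_zero]
      · intro y hy
        simp only [Finset.mem_filter, Finset.mem_univ, true_and] at hy ⊢
        rw [Matrix.mulVec_add, hy, hx₀]
        simp
      · intro x _
        ext j
        simp [add_assoc, CharTwo.add_self_eq_zero]
      · intro y _
        ext j
        simp [add_assoc, CharTwo.add_self_eq_zero]
    classical
    have hsub : (Finset.univ.filter (fun x : Fin n → ZMod 2 => A.mulVec x = 0)).card
        = Fintype.card (LinearMap.ker A.mulVecLin) := by
      rw [Fintype.card_congr (Equiv.subtypeEquivRight (q := fun x : Fin n → ZMod 2 =>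
        A.mulVec x = 0) (fun x => by simp [LinearMap.mem_ker, Matrix.mulVecLin_apply])),
        Fintype.card_subtype]
    have hdim : Module.finrank (ZMod 2) (LinearMap.ker A.mulVecLin) = n - A.rank := by
      have h1 := LinearMap.finrank_range_add_finrank_ker A.mulVecLin
      have h2 : Module.finrank (ZMod 2) (Fin n → ZMod 2) = n := by simp
      have h3 : A.rank = Module.finrank (ZMod 2) (LinearMap.range A.mulVecLin) := rfl
      omega
    have hcard2 : Fintype.card (LinearMap.ker A.mulVecLin) = 2 ^ (n - A.rank) := by
      rw [Module.card_eq_pow_finrank (K := ZMod 2), hdim, ZMod.card]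
    rw [hker, hsub, hcard2]
  -- put it together
  have hsum : ∑ x ∈ Finset.univ.filter (fun x : Fin n → ZMod 2 => A.mulVec x = b),
      (alpha θ x) ^ 2 = (2 : ℝ) ^ (n - A.rank) * (1 / 2 : ℝ) ^ n := by
    rw [Finset.sum_congr rfl fun x _ => halpha x, Finset.sum_const, hcard,
      nsmul_eq_mul]
    push_cast
    ring
  rw [cost, hsum]
  congr 1
  rw [pow_sub₀ (2:ℝ) two_ne_zero hrle, zpow_neg, zpow_natCast]
  have h2n : (2:ℝ) ^ n ≠ 0 := by positivity
  rw [one_div, inv_pow]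
  field_simp
end
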